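/- Let s ≥ 1 be an integer and let k be a squarefree positive integer. Then for every positive integer n, μ(k)·c_k^{(s)}(n) = Σ_{d : d | k and d^s | n} d^s·μ(d), i.e., the sum of d^s·μ(d) over all positive integers d with d^s dividing the generalized gcd (k^s, n)_s. -/

import Mathlib

open scoped BigOperators
open ArithmeticFunction
open scoped ArithmeticFunction.Moebius

/-- Generalized gcd `(a,b)_s`: the largest `d ^ s` (with `d` a positive integer)
dividing both `a` and `b`. -/
def ggcd (s a b : ℕ) : ℕ :=
  (Nat.findGreatest (fun d => d ^ s ∣ a ∧ d ^ s ∣ b) (max a b)) ^ s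

/-- The Cohen–Ramanujan sum `c_k^{(s)}(n) = Σ_{h=1, (h,k^s)_s=1}^{k^s} e^{2πinh/k^s}`. -/
noncomputable def CRS (s k n : ℕ) : ℂ :=
  ∑ h ∈ Finset.Icc 1 (k ^ s),
    if ggcd s h (k ^ s) = 1 then
      Complex.exp (2 * Real.pi * Complex.I * n * h / (k ^ s))
    else 0

/-- The core of `k`: its largest squarefree divisor. -/
def core (k : ℕ) : ℕ := ∏ p ∈ k.primeFactors, p

/-- `k* = k / k̄`. -/
def spart (k : ℕ) : ℕ := k / core k

/-- `ξ_d(k) = d` if `d ∣ k`, and `0` otherwise. -/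
def xi (d k : ℕ) : ℕ := if d ∣ k then d else 0

/-- Klee's function `Φ_s(n) = n ∏_{p prime, p^s ∣ n} (1 - 1/p^s)`. -/
noncomputable def Klee (s n : ℕ) : ℂ :=
  n * ∏ p ∈ n.primeFactors.filter (fun p => p ^ s ∣ n), (1 - 1 / (p : ℂ) ^ s)

/-- The Jordan totient function `J_s(n) = n^s ∏_{p ∣ n} (1 - 1/p^s)` (as a complex number). -/
noncomputable def Jordan (s n : ℕ) : ℂ :=
  (n : ℂ) ^ s * ∏ p ∈ n.primeFactors, (1 - 1 / (p : ℂ) ^ s)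

/-!
`(h, k^s)_s = 1` says that no prime `p ∣ k` has `p^s ∣ h`; for squarefree `k`, expanding
`∏_{p ∣ k} (1 - [p^s ∣ h])` gives `Σ_{d ∣ k, d^s ∣ h} μ(d)`. Substituting this into
`c_k^{(s)}(n)` and summing over `h = d^s j` first turns each inner sum into a full geometric sum of
`(k/d)^s`-th roots of unity, so `c_k^{(s)}(n) = Σ_{d ∣ k, (k/d)^s ∣ n} μ(d) (k/d)^s`.
Since `μ(k) μ(k/d) = μ(d)` for squarefree `k`, substituting `d ↦ k/d` gives the claim.
-/

open Finset Complex

theorem ggcd_eq_one_iff {s a b : ℕ} (hs : s ≠ 0) (hb : b ≠ 0) :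
    ggcd s a b = 1 ↔ ∀ d, d ^ s ∣ a → d ^ s ∣ b → d = 1 := by
  have hbound : ∀ d, d ^ s ∣ b → d ≤ max a b := fun d hd =>
    le_max_of_le_right ((Nat.le_self_pow hs d).trans (Nat.le_of_dvd (Nat.pos_of_ne_zero hb) hd))
  rw [ggcd, pow_eq_one_iff, or_iff_left hs, Nat.findGreatest_eq_iff]
  constructor
  · rintro ⟨-, -, hmax⟩ d hda hdb
    have hd0 : d ≠ 0 := by
      rintro rfl
      exact hb (Nat.eq_zero_of_zero_dvd (by rwa [zero_pow hs] at hdb))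
    by_contra hd1
    exact hmax (by omega) (hbound d hdb) ⟨hda, hdb⟩
  · intro h
    refine ⟨hbound 1 (by simp), fun _ => by simp, fun d hd1 _ hd => ?_⟩
    exact absurd (h d hd.1 hd.2) hd1.ne'

theorem ggcd_pow_eq_one_iff {s h k : ℕ} (hs : s ≠ 0) (hk : k ≠ 0) :
    ggcd s h (k ^ s) = 1 ↔ ∀ p ∈ k.primeFactors, ¬p ^ s ∣ h := by
  simp only [ggcd_eq_one_iff hs (pow_ne_zero s hk), Nat.pow_dvd_pow_iff hs, Nat.mem_primeFactors]
  constructor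
  · rintro h p ⟨hp, hpk, -⟩ hph
    exact hp.one_lt.ne' (h p hph hpk)
  · intro h d hdh hdk
    by_contra hd1
    obtain ⟨p, hp, hpd⟩ := Nat.exists_prime_and_dvd hd1
    exact h p ⟨hp, hpd.trans hdk, hk⟩ ((pow_dvd_pow_of_dvd hpd s).trans hdh)

namespace ArithmeticFunction

def powDvdIndicator (R : Type*) [Zero R] [One R] (s h : ℕ) : ArithmeticFunction R :=
  ⟨fun d => if d ≠ 0 ∧ d ^ s ∣ h then 1 else 0, if_neg (by simp)⟩

theorem powDvdIndicator_apply {R : Type*} [Zero R] [One R] {s h d : ℕ} (hd : d ≠ 0) :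
    powDvdIndicator R s h d = if d ^ s ∣ h then 1 else 0 := by
  simp [powDvdIndicator, hd]

theorem isMultiplicative_powDvdIndicator {R : Type*} [MonoidWithZero R] (s h : ℕ) :
    (powDvdIndicator R s h).IsMultiplicative := by
  refine IsMultiplicative.iff_ne_zero.mpr ⟨by simp [powDvdIndicator], fun {m n} hm hn hmn => ?_⟩
  have hdvd : (m * n) ^ s ∣ h ↔ m ^ s ∣ h ∧ n ^ s ∣ h := by
    rw [mul_pow]
    exact ⟨fun hd => ⟨(dvd_mul_right _ _).trans hd, (dvd_mul_left _ _).trans hd⟩,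
      fun hd => (hmn.pow s s).mul_dvd_of_dvd_of_dvd hd.1 hd.2⟩
  rw [powDvdIndicator_apply (mul_ne_zero hm hn), powDvdIndicator_apply hm,
    powDvdIndicator_apply hn, ite_zero_mul_ite_zero, one_mul]
  exact if_congr hdvd rfl rfl

theorem sum_moebius_filter_pow_dvd {R : Type*} [CommRing R] {k : ℕ} (hk : Squarefree k)
    (s h : ℕ) :
    ∑ d ∈ k.divisors with d ^ s ∣ h, (μ d : R) =
      if ∀ p ∈ k.primeFactors, ¬p ^ s ∣ h then 1 else 0 := by
  calc ∑ d ∈ k.divisors with d ^ s ∣ h, (μ d : R)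
      = ∑ d ∈ k.divisors, μ d * powDvdIndicator R s h d := by
        rw [sum_filter]
        refine sum_congr rfl fun d hd => ?_
        rw [powDvdIndicator_apply (Nat.pos_of_mem_divisors hd).ne']
        split_ifs <;> simp
    _ = ∏ p ∈ k.primeFactors, (1 - powDvdIndicator R s h p) :=
        ((isMultiplicative_powDvdIndicator s h).prodPrimeFactors_one_sub_of_squarefree _ hk).symm
    _ = ∏ p ∈ k.primeFactors, if ¬p ^ s ∣ h then 1 else 0 := by
        refine prod_congr rfl fun p hp => ?_
        rw [powDvdIndicator_apply (Nat.prime_of_mem_primeFactors hp).ne_zero]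
        split_ifs <;> simp
    _ = _ := prod_boole

theorem moebius_mul_moebius_div {k d : ℕ} (hk : Squarefree k) (hd : d ∣ k) :
    μ k * μ (k / d) = μ d := by
  obtain ⟨e, rfl⟩ := hd
  obtain ⟨hde, hdsf, hesf⟩ := Nat.squarefree_mul_iff.mp hk
  rw [isMultiplicative_moebius.map_mul_of_coprime hde,
    Nat.mul_div_cancel_left _ (Nat.pos_of_ne_zero hdsf.ne_zero), mul_assoc, ← sq,
    moebius_sq_eq_one_of_squarefree hesf, mul_one]

end ArithmeticFunction

theorem sum_Icc_pow_of_pow_eq_one {K : Type*} [Field K] [DecidableEq K] {z : K} {M : ℕ}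
    (hz : z ^ M = 1) :
    ∑ j ∈ Icc 1 M, z ^ j = if z = 1 then (M : K) else 0 := by
  split_ifs with hz1
  · simp [hz1]
  · have hshift : ∑ j ∈ Icc 1 M, z ^ j = z * ∑ j ∈ range M, z ^ j := by
      rw [← Ico_add_one_right_eq_Icc, sum_Ico_eq_sum_range, Nat.add_sub_cancel, mul_sum]
      simp_rw [pow_add, pow_one]
    have hgeom : (∑ j ∈ range M, z ^ j) * (z - 1) = 0 := by rw [geom_sum_mul, hz, sub_self]
    rw [hshift, (mul_eq_zero.mp hgeom).resolve_right (sub_ne_zero.mpr hz1), mul_zero]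

theorem sum_Icc_exp_eq_ite {M : ℕ} (hM : M ≠ 0) (n : ℕ) :
    ∑ j ∈ Icc 1 M, exp (2 * Real.pi * I * n * j / M) = if M ∣ n then (M : ℂ) else 0 := by
  have hζ := isPrimitiveRoot_exp M hM
  have hterm : ∀ j : ℕ,
      exp (2 * Real.pi * I * n * j / M) = (exp (2 * Real.pi * I / M) ^ n) ^ j := by
    intro j
    rw [← pow_mul, ← exp_nat_mul]
    push_cast
    ring_nf
  rw [sum_congr rfl fun j _ => hterm j]
  have hz : (exp (2 * Real.pi * I / M) ^ n) ^ M = 1 := by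
    rw [← pow_mul, pow_mul', hζ.pow_eq_one, one_pow]
  rw [sum_Icc_pow_of_pow_eq_one hz]
  exact if_congr (hζ.pow_eq_one_iff_dvd n) rfl rfl

theorem sum_Icc_filter_dvd {M : Type*} [AddCommMonoid M] (f : ℕ → M) {a : ℕ} (ha : a ≠ 0)
    (b : ℕ) : ∑ h ∈ Icc 1 (a * b) with a ∣ h, f h = ∑ j ∈ Icc 1 b, f (a * j) := by
  have hmultiples : {h ∈ Icc 1 (a * b) | a ∣ h} = (Icc 1 b).image (a * ·) := by
    ext x
    simp only [mem_filter, mem_Icc, mem_image]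
    constructor
    · rintro ⟨⟨hx1, hxb⟩, j, rfl⟩
      have hj : j ≠ 0 := by
        rintro rfl
        simp at hx1
      exact ⟨j, ⟨Nat.pos_of_ne_zero hj,
        Nat.le_of_mul_le_mul_left hxb (Nat.pos_of_ne_zero ha)⟩, rfl⟩
    · rintro ⟨j, ⟨hj1, hjb⟩, rfl⟩
      exact ⟨⟨Nat.pos_of_ne_zero (mul_ne_zero ha (by omega)), Nat.mul_le_mul_left a hjb⟩,
        dvd_mul_right a j⟩
  rw [hmultiples,
    sum_image fun _ _ _ _ hij => Nat.eq_of_mul_eq_mul_left (Nat.pos_of_ne_zero ha) hij]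

theorem sum_Icc_filter_dvd_exp {a b : ℕ} (ha : a ≠ 0) (hb : b ≠ 0) (n : ℕ) :
    ∑ h ∈ Icc 1 (a * b) with a ∣ h, exp (2 * Real.pi * I * n * h / (a * b : ℕ)) =
      if b ∣ n then (b : ℂ) else 0 := by
  rw [sum_Icc_filter_dvd _ ha, ← sum_Icc_exp_eq_ite hb]
  refine sum_congr rfl fun j _ => congrArg exp ?_
  have ha' : (a : ℂ) ≠ 0 := Nat.cast_ne_zero.mpr ha
  push_cast
  field_simp

theorem CRS_eq_sum_moebius {s k : ℕ} (hs : s ≠ 0) (hk : Squarefree k) (n : ℕ) :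
    CRS s k n = ∑ d ∈ k.divisors,
      (μ d : ℂ) * if (k / d) ^ s ∣ n then (((k / d) ^ s : ℕ) : ℂ) else 0 := by
  have hind : ∀ h : ℕ,
      (if ggcd s h (k ^ s) = 1 then exp (2 * Real.pi * I * n * h / (k ^ s)) else 0) =
        ∑ d ∈ k.divisors with d ^ s ∣ h,
          (μ d : ℂ) * exp (2 * Real.pi * I * n * h / (k ^ s)) := by
    intro h
    rw [← sum_mul, sum_moebius_filter_pow_dvd hk, ite_mul, one_mul, zero_mul]
    exact if_congr (ggcd_pow_eq_one_iff hs hk.ne_zero) rfl rfl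
  rw [CRS, sum_congr rfl fun h _ => hind h]
  simp only [sum_filter]
  rw [sum_comm]
  refine sum_congr rfl fun d hd => ?_
  have hdk := Nat.dvd_of_mem_divisors hd
  have hkd : k ^ s = d ^ s * (k / d) ^ s := by rw [← mul_pow, Nat.mul_div_cancel' hdk]
  have hkdC : (k : ℂ) ^ s = ((d ^ s * (k / d) ^ s : ℕ) : ℂ) := by rw [← hkd, Nat.cast_pow]
  rw [← sum_filter, ← mul_sum, hkdC, hkd, sum_Icc_filter_dvd_exp]
  · exact pow_ne_zero s (Nat.pos_of_mem_divisors hd).ne'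
  · exact pow_ne_zero s (Nat.div_pos (Nat.divisor_le hd) (Nat.pos_of_mem_divisors hd)).ne'

theorem moebius_CRS_eq_sum_general (s : ℕ) (hs : 1 ≤ s) (k : ℕ)
    (hksf : Squarefree k) (n : ℕ) :
    (μ k : ℂ) * CRS s k n =
      ∑ d ∈ k.divisors.filter (fun d => d ^ s ∣ n), (d : ℂ) ^ s * (μ d : ℂ) := by
  rw [CRS_eq_sum_moebius (by omega) hksf, mul_sum, sum_filter, ← Nat.sum_div_divisors k]
  refine sum_congr rfl fun d hd => ?_
  have hdk := Nat.dvd_of_mem_divisors hd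
  rw [Nat.div_div_self hdk hksf.ne_zero, ← mul_assoc, ← Int.cast_mul,
    moebius_mul_moebius_div hksf hdk]
  split_ifs <;> push_cast <;> ring

/-- For squarefree `k`, `μ(k)·c_k^{(s)}(n) = Σ_{d ∣ k, d^s ∣ n} d^s·μ(d)`. -/
theorem moebius_CRS_eq_sum (s : ℕ) (hs : 1 ≤ s) (k : ℕ) (hk : 0 < k)
    (hksf : Squarefree k) (n : ℕ) (hn : 0 < n) :
    (μ k : ℂ) * CRS s k n =
      ∑ d ∈ k.divisors.filter (fun d => d ^ s ∣ n), (d : ℂ) ^ s * (μ d : ℂ) :=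
  moebius_CRS_eq_sum_general s hs k hksf n
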